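/- Conservativeness of the Neymanian variance estimator: in a completely randomized 2^K factorial experiment with all N_z ≥ 2, let V̂_ℓ = 2^{−2(K−1)} Σ_{z ∈ {0,1}^K} s_z²/N_z, where s_z² = (1/(N_z−1)) Σ_{i : T(i)=z} (Y_i(z) − p_z)². Then for every nonempty subset ℓ ⊆ {1,…,K}, E[V̂_ℓ] − Var(τ̂_ℓ) = S²_{τ_ℓ}/N ≥ 0, with equality to zero if and only if the unit-level effects τ_{i,ℓ} are equal for all units i. -/

import Mathlib

open Finset

/-- The finset of completely randomized assignments of `N` units to treatments in `J`
with group sizes `Nj`. -/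
def assignments (N : ℕ) {J : Type*} [Fintype J] [DecidableEq J] (Nj : J → ℕ) :
    Finset (Fin N → J) :=
  Finset.univ.filter fun T => ∀ j, (Finset.univ.filter fun i => T i = j).card = Nj j

/-- Expectation with respect to the uniform distribution on completely randomized
assignments. -/
noncomputable def expect {N : ℕ} {J : Type*} [Fintype J] [DecidableEq J]
    (Nj : J → ℕ) (f : (Fin N → J) → ℝ) : ℝ :=
  (∑ T ∈ assignments N Nj, f T) / ((assignments N Nj).card : ℝ)

/-- Variance with respect to the randomization distribution. -/
noncomputable def rvar {N : ℕ} {J : Type*} [Fintype J] [DecidableEq J]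
    (Nj : J → ℕ) (f : (Fin N → J) → ℝ) : ℝ :=
  expect Nj fun T => (f T - expect Nj f) ^ 2

/-- Covariance with respect to the randomization distribution. -/
noncomputable def rcov {N : ℕ} {J : Type*} [Fintype J] [DecidableEq J]
    (Nj : J → ℕ) (f g : (Fin N → J) → ℝ) : ℝ :=
  expect Nj fun T => (f T - expect Nj f) * (g T - expect Nj g)

/-- Observed group mean `p_j` of treatment `j` under assignment `T`. -/
noncomputable def pObs {N : ℕ} {J : Type*} [DecidableEq J]
    (Y : Fin N → J → ℝ) (Nj : J → ℕ) (j : J) (T : Fin N → J) : ℝ :=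
  (∑ i ∈ Finset.univ.filter fun i => T i = j, Y i j) / (Nj j : ℝ)

/-- Population mean `P_j`. -/
noncomputable def Pmean {N : ℕ} {J : Type*} (Y : Fin N → J → ℝ) (j : J) : ℝ :=
  (∑ i, Y i j) / (N : ℝ)

/-- Population variance `S_j²`. -/
noncomputable def S2 {N : ℕ} {J : Type*} (Y : Fin N → J → ℝ) (j : J) : ℝ :=
  (∑ i, (Y i j - Pmean Y j) ^ 2) / ((N : ℝ) - 1)

/-- Variance of unit-level differences `S²_{j-j'}`. -/
noncomputable def S2diff {N : ℕ} {J : Type*} (Y : Fin N → J → ℝ) (j j' : J) : ℝ :=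
  (∑ i, (Y i j - Y i j' - (Pmean Y j - Pmean Y j')) ^ 2) / ((N : ℝ) - 1)

/-- Contrast coefficient `λ_{ℓ,z} = Π_{k∈ℓ} (2 z_k - 1)` for a subset `ℓ` of factors and a
treatment `z ∈ {0,1}^K`. -/
def lam {K : ℕ} (ℓ : Finset (Fin K)) (z : Fin K → Bool) : ℝ :=
  ∏ k ∈ ℓ, (if z k then 1 else -1)

/-- Finite-population factorial effect `τ_ℓ = 2^{-(K-1)} Σ_z λ_{ℓ,z} P_z`. -/
noncomputable def tauFP {N K : ℕ} (Y : Fin N → (Fin K → Bool) → ℝ) (ℓ : Finset (Fin K)) : ℝ :=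
  (1 / 2 ^ (K - 1)) * ∑ z, lam ℓ z * Pmean Y z

/-- Unit-level factorial effect `τ_{i,ℓ} = 2^{-(K-1)} Σ_z λ_{ℓ,z} Y_i(z)`. -/
noncomputable def tauUnit {N K : ℕ} (Y : Fin N → (Fin K → Bool) → ℝ) (i : Fin N)
    (ℓ : Finset (Fin K)) : ℝ :=
  (1 / 2 ^ (K - 1)) * ∑ z, lam ℓ z * Y i z

/-- Plug-in factorial effect estimator `τ̂_ℓ = 2^{-(K-1)} Σ_z λ_{ℓ,z} p_z`. -/
noncomputable def tauHat {N K : ℕ} (Y : Fin N → (Fin K → Bool) → ℝ)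
    (Nj : (Fin K → Bool) → ℕ) (ℓ : Finset (Fin K)) (T : Fin N → (Fin K → Bool)) : ℝ :=
  (1 / 2 ^ (K - 1)) * ∑ z, lam ℓ z * pObs Y Nj z T

/-- Variance of unit-level factorial effects `S²_{τ_ℓ}`. -/
noncomputable def S2tau {N K : ℕ} (Y : Fin N → (Fin K → Bool) → ℝ) (ℓ : Finset (Fin K)) : ℝ :=
  (∑ i, (tauUnit Y i ℓ - tauFP Y ℓ) ^ 2) / ((N : ℝ) - 1)

/-- Sample variance `s_z²` of the observed outcomes in treatment group `z`. -/
noncomputable def s2obs {N : ℕ} {J : Type*} [DecidableEq J]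
    (Y : Fin N → J → ℝ) (Nj : J → ℕ) (j : J) (T : Fin N → J) : ℝ :=
  (∑ i ∈ Finset.univ.filter fun i => T i = j, (Y i j - pObs Y Nj j T) ^ 2) /
    ((Nj j : ℝ) - 1)

/-!
Centre the outcomes, `ε i z = Y i z - P_z`, and let `G_z(T) = ∑_{T i = z} ε i z`, so that
`p_z - P_z = G_z / N_z`. Permuting units preserves the uniform law on assignments, so the first two
moments of the indicators `1{T i = z}` are explicit; as `∑ i, ε i z = 0` they give
`N (N - 1) E[G_z G_z'] = N_z (δ_{zz'} N - N_z') ∑ i, ε i z * ε i z'`. This yields `E[s_z²] = S_z²`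
and Neyman's formula `Var(∑ z, c_z p_z) = ∑ z, c_z² S_z² / N_z - S²(∑ z, c_z Y(z)) / N`.
For factorial contrasts `c_z = 2^{-(K-1)} λ_{ℓ,z}` with `λ_{ℓ,z}² = 1` the first term is `E[V̂_ℓ]`.
-/

open scoped BigOperators

section Randomization

variable {N : ℕ} {J : Type*} [Fintype J] [DecidableEq J] {Nj : J → ℕ}

lemma expect_eq_finsetExpect (f : (Fin N → J) → ℝ) :
    expect Nj f = 𝔼 T ∈ assignments N Nj, f T :=
  (Finset.expect_eq_sum_div_card _ _).symm

lemma card_filter_eq_of_mem_assignments {T : Fin N → J} (hT : T ∈ assignments N Nj) (j : J) :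
    #{i | T i = j} = Nj j :=
  (Finset.mem_filter.mp hT).2 j

lemma assignments_nonempty (hsum : ∑ j, Nj j = N) : (assignments N Nj).Nonempty := by
  obtain ⟨e⟩ : Nonempty ((Σ j, Fin (Nj j)) ≃ Fin N) :=
    ⟨Fintype.equivFinOfCardEq (by simp [hsum])⟩
  refine ⟨fun i => (e.symm i).1, Finset.mem_filter.mpr ⟨mem_univ _, fun j => ?_⟩⟩
  rw [card_filter, Equiv.sum_comp e.symm (fun s => if s.1 = j then 1 else 0),
    ← univ_sigma_univ, sum_sigma]
  simp [apply_ite Finset.card]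

lemma comp_perm_mem_assignments {T : Fin N → J} (hT : T ∈ assignments N Nj)
    (σ : Equiv.Perm (Fin N)) : T ∘ σ ∈ assignments N Nj := by
  refine Finset.mem_filter.mpr ⟨mem_univ _, fun j => ?_⟩
  rw [← card_filter_eq_of_mem_assignments hT j]
  exact card_bij (fun i _ => σ i) (by simp) (by simp) (fun i hi => ⟨σ.symm i, by simpa using hi⟩)

lemma expect_comp_perm (σ : Equiv.Perm (Fin N)) (f : (Fin N → J) → ℝ) :
    expect Nj (fun T => f (T ∘ σ)) = expect Nj f := by
  simp only [expect_eq_finsetExpect]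
  exact expect_nbij' (· ∘ σ) (· ∘ σ.symm) (fun T hT => comp_perm_mem_assignments hT σ)
    (fun T hT => comp_perm_mem_assignments hT σ.symm) (fun T _ => by ext; simp)
    (fun T _ => by ext; simp) (fun T _ => rfl)

lemma natCast_mul_expect_indicator (hA : (assignments N Nj).Nonempty) (i : Fin N) (j : J) :
    (N : ℝ) * expect Nj (fun T => if T i = j then 1 else 0) = Nj j := by
  have hsymm : ∀ k, expect Nj (fun T => if T k = j then (1 : ℝ) else 0)
      = expect Nj (fun T => if T i = j then 1 else 0) := fun k => by
    simpa using expect_comp_perm (Nj := Nj) (Equiv.swap i k) fun T => if T i = j then 1 else 0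
  calc (N : ℝ) * expect Nj (fun T => if T i = j then 1 else 0)
      = ∑ k, expect Nj (fun T => if T k = j then (1 : ℝ) else 0) := by
        rw [sum_congr rfl fun k _ => hsymm k]; simp
    _ = expect Nj (fun T : Fin N → J => (#{k | T k = j} : ℝ)) := by
        simp only [expect_eq_finsetExpect, ← expect_sum_comm, sum_boole]
    _ = Nj j := by
        rw [expect_eq_finsetExpect, expect_congr rfl fun T hT => by
          rw [card_filter_eq_of_mem_assignments hT], expect_const hA]

lemma natCast_mul_expect_indicator_mul_indicator_of_ne (hA : (assignments N Nj).Nonempty)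
    {i i' : Fin N} (hii' : i ≠ i') (j j' : J) :
    (N : ℝ) * (N - 1) *
        expect Nj (fun T => (if T i = j then 1 else 0) * (if T i' = j' then 1 else 0))
      = Nj j * (Nj j' - if j = j' then 1 else 0) := by
  set E := fun k =>
    expect Nj (fun T => (if T i = j then (1 : ℝ) else 0) * (if T k = j' then 1 else 0))
  have hsymm : ∀ k ∈ univ.erase i, E k = E i' := fun k hk => by
    have hk := ne_of_mem_erase hk
    simpa [E, Equiv.swap_apply_of_ne_of_ne hii' hk.symm] using
      expect_comp_perm (Nj := Nj) (Equiv.swap i' k)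
        fun T => (if T i = j then (1 : ℝ) else 0) * (if T i' = j' then 1 else 0)
  have hrow : ∑ k ∈ univ.erase i, E k
      = (Nj j' - if j = j' then 1 else 0) * expect Nj (fun T => if T i = j then 1 else 0) := by
    simp only [E, expect_eq_finsetExpect, ← expect_sum_comm, ← mul_sum, mul_expect]
    refine expect_congr rfl fun T hT => ?_
    rw [sum_erase_eq_sub (mem_univ i), sum_boole, card_filter_eq_of_mem_assignments hT]
    split_ifs <;> simp_all
  calc (N : ℝ) * (N - 1) * E i' = N * ∑ k ∈ univ.erase i, E k := by
        rw [sum_congr rfl hsymm, sum_const, card_erase_of_mem (mem_univ i), card_univ,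
          Fintype.card_fin, nsmul_eq_mul, Nat.cast_pred i.pos, mul_assoc]
    _ = Nj j * (Nj j' - if j = j' then 1 else 0) := by
        rw [hrow, mul_left_comm, natCast_mul_expect_indicator hA, mul_comm]

-- The off-diagonal value plus a correction on the diagonal `i = i'`.
lemma natCast_mul_expect_indicator_mul_indicator (hA : (assignments N Nj).Nonempty)
    (i i' : Fin N) (j j' : J) :
    (N : ℝ) * (N - 1) *
        expect Nj (fun T => (if T i = j then 1 else 0) * (if T i' = j' then 1 else 0))
      = Nj j * (Nj j' - if j = j' then 1 else 0)
        + if i = i' then (Nj j : ℝ) * ((if j = j' then (N : ℝ) else 0) - Nj j') else 0 := by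
  rcases eq_or_ne i i' with rfl | hii'
  · have hdiag : ∀ T : Fin N → J, (if T i = j then (1 : ℝ) else 0) * (if T i = j' then 1 else 0)
        = if j = j' then (if T i = j then 1 else 0) else 0 := fun T => by
      split_ifs <;> simp_all
    simp only [hdiag, if_true]
    have := natCast_mul_expect_indicator hA i j
    split_ifs
    · linear_combination ((N : ℝ) - 1) * this
    · simp [expect_eq_finsetExpect]
  · rw [natCast_mul_expect_indicator_mul_indicator_of_ne hA hii', if_neg hii', add_zero]

end Randomization

def groupSum {N : ℕ} {J : Type*} [DecidableEq J] (w : Fin N → ℝ) (j : J) (T : Fin N → J) : ℝ :=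
  ∑ i ∈ Finset.univ.filter fun i => T i = j, w i

lemma groupSum_eq_sum_indicator_mul {N : ℕ} {J : Type*} [DecidableEq J] (w : Fin N → ℝ) (j : J)
    (T : Fin N → J) : groupSum w j T = ∑ i, (if T i = j then 1 else 0) * w i := by
  simp only [groupSum, sum_filter, boole_mul]

section GroupSum

variable {N : ℕ} {J : Type*} [Fintype J] [DecidableEq J] {Nj : J → ℕ}

lemma natCast_mul_expect_groupSum (hA : (assignments N Nj).Nonempty) (w : Fin N → ℝ) (j : J) :
    (N : ℝ) * expect Nj (groupSum w j) = Nj j * ∑ i, w i := by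
  simp only [groupSum_eq_sum_indicator_mul, expect_eq_finsetExpect, expect_sum_comm, mul_sum,
    ← expect_mul, ← mul_assoc]
  simp only [← expect_eq_finsetExpect, natCast_mul_expect_indicator hA]

lemma natCast_mul_expect_groupSum_mul_groupSum (hA : (assignments N Nj).Nonempty)
    {w : Fin N → ℝ} (hw : ∑ i, w i = 0) (v : Fin N → ℝ) (j j' : J) :
    (N : ℝ) * (N - 1) * expect Nj (fun T => groupSum w j T * groupSum v j' T)
      = Nj j * ((if j = j' then (N : ℝ) else 0) - Nj j') * ∑ i, w i * v i := by
  have hprod : ∀ T, groupSum w j T * groupSum v j' T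
      = ∑ i, ∑ i', ((if T i = j then 1 else 0) * (if T i' = j' then 1 else 0)) * (w i * v i') :=
    fun T => by
      simp only [groupSum_eq_sum_indicator_mul, sum_mul_sum]
      exact sum_congr rfl fun _ _ => sum_congr rfl fun _ _ => by ring
  have hind := natCast_mul_expect_indicator_mul_indicator hA (j := j) (j' := j')
  set a : ℝ := Nj j * (Nj j' - if j = j' then 1 else 0)
  set b : ℝ := Nj j * ((if j = j' then (N : ℝ) else 0) - Nj j')
  calc (N : ℝ) * (N - 1) * expect Nj (fun T => groupSum w j T * groupSum v j' T)
      = ∑ i, ∑ i', (N * (N - 1) * expect Nj fun T =>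
          (if T i = j then 1 else 0) * (if T i' = j' then 1 else 0)) * (w i * v i') := by
        simp only [hprod, expect_eq_finsetExpect, expect_sum_comm, mul_sum, mul_assoc, expect_mul]
    _ = ∑ i, ∑ i', (a + if i = i' then b else 0) * (w i * v i') := by simp only [hind]
    _ = a * ∑ i, ∑ i', w i * v i' + b * ∑ i, w i * v i := by
        simp only [add_mul, sum_add_distrib, ite_mul, zero_mul, sum_ite_eq, mem_univ, if_true,
          mul_sum]
    _ = b * ∑ i, w i * v i := by rw [← sum_mul_sum, hw]; ring

lemma natCast_mul_expect_sq_sum_groupSum (hA : (assignments N Nj).Nonempty) (w : Fin N → J → ℝ)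
    (hw : ∀ j, ∑ i, w i j = 0) (a : J → ℝ) :
    (N : ℝ) * (N - 1) * expect Nj (fun T => (∑ j, a j * groupSum (w · j) j T) ^ 2)
      = N * ∑ j, a j ^ 2 * Nj j * ∑ i, w i j ^ 2 - ∑ i, (∑ j, a j * Nj j * w i j) ^ 2 := by
  have hterm : ∀ j j', a j * a j' * (Nj j * ((if j = j' then (N : ℝ) else 0) - Nj j')
        * ∑ i, w i j * w i j')
      = (if j = j' then N * (a j ^ 2 * Nj j * ∑ i, w i j ^ 2) else 0)
        - a j * Nj j * (a j' * Nj j') * ∑ i, w i j * w i j' := fun j j' => by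
    split_ifs with h
    · subst h; simp only [sq]; ring
    · ring
  calc (N : ℝ) * (N - 1) * expect Nj (fun T => (∑ j, a j * groupSum (w · j) j T) ^ 2)
      = ∑ j, ∑ j', a j * a j' * ((N : ℝ) * (N - 1) *
          expect Nj (fun T => groupSum (w · j) j T * groupSum (w · j') j' T)) := by
        have hsq : ∀ T, (∑ j, a j * groupSum (w · j) j T) ^ 2
            = ∑ j, ∑ j', a j * a j' * (groupSum (w · j) j T * groupSum (w · j') j' T) := fun T => by
          rw [sq, sum_mul_sum]
          exact sum_congr rfl fun _ _ => sum_congr rfl fun _ _ => by ring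
        simp only [hsq, expect_eq_finsetExpect, expect_sum_comm, ← mul_expect, mul_sum]
        exact sum_congr rfl fun _ _ => sum_congr rfl fun _ _ => by ring
    _ = ∑ j, ∑ j', a j * a j' * (Nj j * ((if j = j' then (N : ℝ) else 0) - Nj j')
          * ∑ i, w i j * w i j') := by
        simp only [natCast_mul_expect_groupSum_mul_groupSum hA (hw _)]
    _ = N * ∑ j, a j ^ 2 * Nj j * ∑ i, w i j ^ 2
          - ∑ j, ∑ j', a j * Nj j * (a j' * Nj j') * ∑ i, w i j * w i j' := by
        simp only [hterm, sum_sub_distrib, sum_ite_eq, mem_univ, if_true, ← mul_sum]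
    _ = N * ∑ j, a j ^ 2 * Nj j * ∑ i, w i j ^ 2 - ∑ i, (∑ j, a j * Nj j * w i j) ^ 2 := by
        congr 1
        symm
        simp only [sq, sum_mul_sum]
        simp only [mul_sum]
        rw [sum_comm]
        refine sum_congr rfl fun j _ => ?_
        rw [sum_comm]
        exact sum_congr rfl fun _ _ => sum_congr rfl fun _ _ => by ring

end GroupSum

lemma sum_sub_Pmean {N : ℕ} {J : Type*} (Y : Fin N → J → ℝ) (hN : N ≠ 0) (j : J) :
    ∑ i, (Y i j - Pmean Y j) = 0 := by
  rw [sum_sub_distrib, sum_const, card_univ, Fintype.card_fin, nsmul_eq_mul, Pmean,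
    mul_div_cancel₀ _ (Nat.cast_ne_zero.mpr hN), sub_self]

section Estimators

variable {N : ℕ} {J : Type*} [Fintype J] [DecidableEq J] {Nj : J → ℕ} (Y : Fin N → J → ℝ)

lemma pObs_sub_Pmean {T : Fin N → J} (hT : T ∈ assignments N Nj) {j : J} (hj : Nj j ≠ 0) :
    pObs Y Nj j T - Pmean Y j = groupSum (Y · j - Pmean Y j) j T / Nj j := by
  rw [groupSum, sum_sub_distrib, sum_const, card_filter_eq_of_mem_assignments hT, nsmul_eq_mul,
    pObs, sub_div, mul_div_cancel_left₀ _ (Nat.cast_ne_zero.mpr hj)]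

lemma expect_pObs (hA : (assignments N Nj).Nonempty) (hN : N ≠ 0) {j : J} (hj : Nj j ≠ 0) :
    expect Nj (pObs Y Nj j) = Pmean Y j := by
  have hcentred : expect Nj (groupSum (Y · j - Pmean Y j) j) = 0 := by
    have := natCast_mul_expect_groupSum hA (Y · j - Pmean Y j) j
    rwa [sum_sub_Pmean Y hN, mul_zero, mul_eq_zero, or_iff_right (Nat.cast_ne_zero.mpr hN)] at this
  have hpt : ∀ T ∈ assignments N Nj,
      pObs Y Nj j T = Pmean Y j + groupSum (Y · j - Pmean Y j) j T / Nj j := fun T hT => by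
    rw [← pObs_sub_Pmean Y hT hj, add_sub_cancel]
  rw [expect_eq_finsetExpect] at hcentred ⊢
  rw [expect_congr rfl hpt, expect_add_distrib, expect_const hA, ← expect_div, hcentred,
    zero_div, add_zero]

lemma rvar_sum_mul_pObs (hA : (assignments N Nj).Nonempty) (hN : 1 < N)
    (hNj : ∀ j, Nj j ≠ 0) (c : J → ℝ) :
    rvar Nj (fun T => ∑ j, c j * pObs Y Nj j T)
      = ∑ j, c j ^ 2 * S2 Y j / Nj j
        - (∑ i, (∑ j, c j * (Y i j - Pmean Y j)) ^ 2) / ((N - 1) * N) := by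
  have hN0 : (N : ℝ) ≠ 0 := by positivity
  have hN1 : (N : ℝ) - 1 ≠ 0 := sub_ne_zero.mpr (by exact_mod_cast hN.ne')
  have hmean : expect Nj (fun T => ∑ j, c j * pObs Y Nj j T) = ∑ j, c j * Pmean Y j := by
    simp only [expect_eq_finsetExpect, expect_sum_comm, ← mul_expect]
    refine sum_congr rfl fun j _ => ?_
    rw [← expect_eq_finsetExpect, expect_pObs Y hA (by omega) (hNj j)]
  have hdev : ∀ T ∈ assignments N Nj, (∑ j, c j * pObs Y Nj j T - ∑ j, c j * Pmean Y j) ^ 2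
      = (∑ j, c j / Nj j * groupSum (Y · j - Pmean Y j) j T) ^ 2 := fun T hT => by
    simp only [← sum_sub_distrib, ← mul_sub, pObs_sub_Pmean Y hT (hNj _), mul_div_assoc',
      div_mul_eq_mul_div]
  have hquad := natCast_mul_expect_sq_sum_groupSum hA (fun i j => Y i j - Pmean Y j)
    (sum_sub_Pmean Y (by omega)) (fun j => c j / Nj j)
  rw [rvar, hmean, expect_eq_finsetExpect, expect_congr rfl hdev, ← expect_eq_finsetExpect]
  rw [← mul_right_inj' (mul_ne_zero hN0 hN1), hquad]
  have hNj' : ∀ j, (Nj j : ℝ) ≠ 0 := fun j => Nat.cast_ne_zero.mpr (hNj j)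
  simp only [S2, div_mul_cancel₀ _ (hNj' _)]
  rw [mul_sub ((N : ℝ) * (N - 1)), mul_sum _ _ ((N : ℝ) * (N - 1)), mul_sum _ _ (N : ℝ)]
  congr 1
  · exact sum_congr rfl fun j _ => by field_simp
  · field_simp

lemma s2obs_eq_of_mem_assignments {T : Fin N → J} (hT : T ∈ assignments N Nj) {j : J}
    (hj : Nj j ≠ 0) :
    s2obs Y Nj j T = (groupSum (fun i => (Y i j - Pmean Y j) ^ 2) j T
        - groupSum (Y · j - Pmean Y j) j T ^ 2 / Nj j) / (Nj j - 1) := by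
  have hd := pObs_sub_Pmean Y hT hj
  have hexpand : ∀ i, (Y i j - pObs Y Nj j T) ^ 2 = (Y i j - Pmean Y j) ^ 2
      - 2 * (pObs Y Nj j T - Pmean Y j) * (Y i j - Pmean Y j)
      + (pObs Y Nj j T - Pmean Y j) ^ 2 := fun i => by ring
  have hG : ∑ i ∈ univ.filter (T · = j), (Y i j - Pmean Y j)
      = groupSum (Y · j - Pmean Y j) j T := rfl
  rw [s2obs, groupSum]
  congr 1
  rw [sum_congr rfl fun i _ => hexpand i, sum_add_distrib, sum_sub_distrib, ← mul_sum, sum_const,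
    card_filter_eq_of_mem_assignments hT, nsmul_eq_mul, hG, hd]
  generalize groupSum (Y · j - Pmean Y j) j T = G
  field_simp
  ring

lemma expect_s2obs (hA : (assignments N Nj).Nonempty) (hN : 1 < N) {j : J} (hj : 1 < Nj j) :
    expect Nj (s2obs Y Nj j) = S2 Y j := by
  have hN0 : (N : ℝ) ≠ 0 := by positivity
  have hN1 : (N : ℝ) - 1 ≠ 0 := sub_ne_zero.mpr (by exact_mod_cast hN.ne')
  have hj0 : (Nj j : ℝ) ≠ 0 := by positivity
  have hj1 : (Nj j : ℝ) - 1 ≠ 0 := sub_ne_zero.mpr (by exact_mod_cast hj.ne')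
  have hsq := natCast_mul_expect_groupSum hA (fun i => (Y i j - Pmean Y j) ^ 2) j
  have hprod := natCast_mul_expect_groupSum_mul_groupSum hA (sum_sub_Pmean Y (by omega) j)
    (Y · j - Pmean Y j) j j
  simp only [expect_eq_finsetExpect, if_true, ← sq] at hsq hprod
  rw [mul_comm, ← eq_div_iff hN0] at hsq
  rw [mul_comm, ← eq_div_iff (mul_ne_zero hN0 hN1)] at hprod
  rw [expect_eq_finsetExpect, expect_congr rfl fun T hT => s2obs_eq_of_mem_assignments Y hT
    (by omega), ← expect_div, expect_sub_distrib, ← expect_div, hsq, hprod, S2]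
  field_simp
  ring

end Estimators

lemma sum_sq_sub_mean_eq_zero_iff {n : ℕ} (hn : n ≠ 0) (x : Fin n → ℝ) :
    ∑ i, (x i - (∑ k, x k) / n) ^ 2 = 0 ↔ ∀ i i', x i = x i' := by
  rw [sum_eq_zero_iff_of_nonneg fun i _ => sq_nonneg _]
  constructor
  · intro h i i'
    have hmean : ∀ k, x k = (∑ k, x k) / n := fun k =>
      sub_eq_zero.mp (pow_eq_zero_iff two_ne_zero |>.mp (h k (mem_univ k)))
    rw [hmean i, hmean i']
  · intro h i _
    rw [sum_congr rfl fun k _ => h k i, sum_const, card_univ, Fintype.card_fin, nsmul_eq_mul,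
      mul_div_cancel_left₀ _ (Nat.cast_ne_zero.mpr hn), sub_self, sq, mul_zero]

lemma lam_sq {K : ℕ} (ℓ : Finset (Fin K)) (z : Fin K → Bool) : lam ℓ z ^ 2 = 1 := by
  rw [lam, ← prod_pow]
  exact prod_eq_one fun k _ => by split_ifs <;> norm_num

section Factorial

variable {N K : ℕ} (Y : Fin N → (Fin K → Bool) → ℝ) (ℓ : Finset (Fin K))

lemma tauHat_eq_sum_mul_pObs (Nj : (Fin K → Bool) → ℕ) :
    tauHat Y Nj ℓ = fun T => ∑ z, 1 / 2 ^ (K - 1) * lam ℓ z * pObs Y Nj z T := by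
  funext T
  simp only [tauHat, mul_sum, mul_assoc]

lemma tauUnit_sub_tauFP (i : Fin N) :
    tauUnit Y i ℓ - tauFP Y ℓ = ∑ z, 1 / 2 ^ (K - 1) * lam ℓ z * (Y i z - Pmean Y z) := by
  simp only [tauUnit, tauFP, ← mul_sub, ← sum_sub_distrib, mul_sum, mul_assoc]

lemma tauFP_eq_sum_tauUnit_div : tauFP Y ℓ = (∑ i, tauUnit Y i ℓ) / N := by
  simp only [tauFP, tauUnit, ← mul_sum]
  rw [mul_div_assoc]
  congr 1
  rw [sum_comm, sum_div]
  simp only [Pmean, mul_sum, mul_div_assoc']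

end Factorial

theorem neymanian_variance_conservative_general {N K : ℕ} (hN : 2 ≤ N)
    (Y : Fin N → (Fin K → Bool) → ℝ) (Nj : (Fin K → Bool) → ℕ)
    (h2 : ∀ z, 2 ≤ Nj z) (hsum : ∑ z, Nj z = N)
    (ℓ : Finset (Fin K)) :
    expect Nj (fun T => (1 / 2 ^ (2 * (K - 1))) * ∑ z, s2obs Y Nj z T / (Nj z : ℝ))
        - rvar Nj (tauHat Y Nj ℓ) = S2tau Y ℓ / (N : ℝ) ∧
      0 ≤ S2tau Y ℓ / (N : ℝ) ∧
      (S2tau Y ℓ / (N : ℝ) = 0 ↔ ∀ i i' : Fin N, tauUnit Y i ℓ = tauUnit Y i' ℓ) := by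
  have hA := assignments_nonempty hsum
  have hN1 : (1 : ℝ) < N := by exact_mod_cast hN
  have hcoef : ∀ z, (1 / 2 ^ (K - 1) * lam ℓ z) ^ 2 = 1 / 2 ^ (2 * (K - 1)) := fun z => by
    rw [mul_pow, lam_sq, mul_one, div_pow, one_pow, ← pow_mul, mul_comm]
  have hEV : expect Nj (fun T => 1 / 2 ^ (2 * (K - 1)) * ∑ z, s2obs Y Nj z T / Nj z)
      = ∑ z, (1 / 2 ^ (K - 1) * lam ℓ z) ^ 2 * S2 Y z / Nj z := by
    simp only [expect_eq_finsetExpect, ← mul_expect, expect_sum_comm, ← expect_div]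
    simp only [← expect_eq_finsetExpect, expect_s2obs Y hA hN (h2 _), hcoef, mul_sum, mul_div_assoc]
  have hVar : rvar Nj (tauHat Y Nj ℓ)
      = ∑ z, (1 / 2 ^ (K - 1) * lam ℓ z) ^ 2 * S2 Y z / Nj z - S2tau Y ℓ / N := by
    rw [tauHat_eq_sum_mul_pObs, rvar_sum_mul_pObs Y hA hN fun z => by have := h2 z; omega,
      S2tau, div_div]
    simp only [tauUnit_sub_tauFP]
  have hS : 0 ≤ S2tau Y ℓ := div_nonneg (sum_nonneg fun i _ => sq_nonneg _) (by linarith)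
  refine ⟨by rw [hEV, hVar]; ring, div_nonneg hS (by positivity), ?_⟩
  rw [div_eq_zero_iff, S2tau, div_eq_zero_iff, tauFP_eq_sum_tauUnit_div,
    sum_sq_sub_mean_eq_zero_iff (by omega)]
  simp only [sub_eq_zero, hN1.ne', Nat.cast_eq_zero, show N ≠ 0 by omega, or_false]

/-- Conservativeness of the Neymanian variance estimator
`V̂_ℓ = 2^{-2(K-1)} Σ_z s_z²/N_z`: for every nonempty subset `ℓ`,
`E[V̂_ℓ] - Var(τ̂_ℓ) = S²_{τ_ℓ}/N ≥ 0`, with equality to zero iff the unit-level effects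
`τ_{i,ℓ}` are equal for all units. -/
theorem neymanian_variance_conservative {N K : ℕ} (hN : 2 ≤ N)
    (Y : Fin N → (Fin K → Bool) → ℝ) (Nj : (Fin K → Bool) → ℕ)
    (h2 : ∀ z, 2 ≤ Nj z) (hsum : ∑ z, Nj z = N)
    (ℓ : Finset (Fin K)) (hℓ : ℓ.Nonempty) :
    expect Nj (fun T => (1 / 2 ^ (2 * (K - 1))) * ∑ z, s2obs Y Nj z T / (Nj z : ℝ))
        - rvar Nj (tauHat Y Nj ℓ) = S2tau Y ℓ / (N : ℝ) ∧
      0 ≤ S2tau Y ℓ / (N : ℝ) ∧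
      (S2tau Y ℓ / (N : ℝ) = 0 ↔ ∀ i i' : Fin N, tauUnit Y i ℓ = tauUnit Y i' ℓ) :=
  neymanian_variance_conservative_general hN Y Nj h2 hsum ℓ
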